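/- Let m₀ ≥ 1 and m ≥ m₀ be integers, and let f : ℝ → ℝ be 2m-times continuously differentiable. Suppose that f^{(2j−1)}(x) → 0 as x → ∞ for every j = m₀, …, m−1, and that ∫_0^{∞} |f^{(2m−1)}(x)| dx < ∞. Let F be any antiderivative of f. Then the limit lim_{n→∞} ( ∑_{k=0}^{n−1} f(k) − G^EM_{m₀,F}(n) ) exists and equals f(0) − G^EM_{m,F}(1) + R^EM_{m,f}(∞), where R^EM_{m,f}(∞) := (1/(2m−1)!) · ∫_0^{∞} f^{(2m−1)}(x) · B_{2m−1}(x − ⌊x⌋) dx. -/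

import Mathlib

/-!
Integrating by parts against the shifted Bernoulli polynomials `B_k(x - a)` on `[a, a + 1]`
(`B_k' = k B_{k-1}`, `B_k(1) = B_k(0) = B_k` for `k ≠ 1`, and `B_{2j+1} = 0` for `j ≥ 1`) gives
the Euler–Maclaurin formula on a unit interval. Since `B_k(x - k) = B_k(fract x)` almost
everywhere on `[k, k + 1]`, summing over `k < N` gives it on `[0, N]` with the periodic Bernoulli
function in the remainder. Subtracting `G^EM_{m₀,F}(N + 1)`, where `∫_0^N f = F(N) - F(0)`, leaves
`f(0) - G^EM_{m,F}(1)`, the remainder over `[0, N]`, and the boundary terms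
`B_{2j}/(2j)! f^{(2j-1)}(N)` for `m₀ ≤ j < m`. The remainder converges because the periodic
Bernoulli function is bounded and `f^{(2m-1)}` is integrable, and the boundary terms tend to zero.
-/

open MeasureTheory
open scoped Nat

/-- `G^EM_{m,F}(x) := F(x−1) + F′(x−1)/2 + ∑_{j=1}^{m−1} (B_{2j}/(2j)!)·F^{(2j)}(x−1)`,
where `B_k` is the `k`-th Bernoulli number (`B₁ = −1/2`). -/
noncomputable def emG (m : ℕ) (F : ℝ → ℝ) (x : ℝ) : ℝ :=
  F (x - 1) + deriv F (x - 1) / 2 +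
    ∑ j ∈ Finset.Icc 1 (m - 1),
      ((bernoulli (2 * j) : ℚ) : ℝ) / ((2 * j).factorial : ℝ) * iteratedDeriv (2 * j) F (x - 1)

theorem bernoulliFun_eq_aeval (k : ℕ) (x : ℝ) :
    bernoulliFun k x = Polynomial.aeval x (Polynomial.bernoulli k) :=
  Polynomial.eval_map_algebraMap _ _

theorem exists_bound_bernoulliFun_fract (k : ℕ) :
    ∃ C, ∀ x : ℝ, ‖bernoulliFun k (Int.fract x)‖ ≤ C := by
  obtain ⟨C, hC⟩ := isCompact_Icc.exists_bound_of_continuousOn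
    (continuous_bernoulliFun k).continuousOn (s := Set.Icc (0 : ℝ) 1)
  exact ⟨C, fun x => hC _ ⟨Int.fract_nonneg x, (Int.fract_lt_one x).le⟩⟩

theorem MeasureTheory.IntegrableOn.mul_bernoulliFun_fract {g : ℝ → ℝ} {s : Set ℝ}
    (hg : IntegrableOn g s) (k : ℕ) :
    IntegrableOn (fun x => g x * bernoulliFun k (Int.fract x)) s := by
  obtain ⟨C, hC⟩ := exists_bound_bernoulliFun_fract k
  exact hg.mul_bdd
    ((continuous_bernoulliFun k).measurable.comp measurable_fract).aestronglyMeasurable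
    (Filter.Eventually.of_forall hC)

theorem integral_comp_fract_eq_sub (G : ℝ → ℝ → ℝ) (k : ℤ) :
    ∫ x in (k : ℝ)..k + 1, G (Int.fract x) x = ∫ x in (k : ℝ)..k + 1, G (x - k) x := by
  have hk : (k : ℝ) ≤ k + 1 := by linarith
  simp only [intervalIntegral.integral_of_le hk, integral_Ioc_eq_integral_Ioo]
  refine setIntegral_congr_fun measurableSet_Ioo fun x hx => ?_
  have hfract : Int.fract x = x - k :=
    Int.fract_eq_iff.mpr ⟨by linarith [hx.1], by linarith [hx.2], k, by ring⟩
  rw [hfract]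

theorem integral_mul_bernoulliFun_sub {g g' : ℝ → ℝ} {a : ℝ}
    (hg : ∀ x ∈ Set.uIcc a (a + 1), HasDerivAt g (g' x) x)
    (hg' : IntervalIntegrable g' volume a (a + 1)) (k : ℕ) :
    (∫ x in a..a + 1, g x * bernoulliFun k (x - a)) / k ! =
      (g (a + 1) * bernoulliFun (k + 1) 1 - g a * bernoulliFun (k + 1) 0) / (k + 1)! -
        (∫ x in a..a + 1, g' x * bernoulliFun (k + 1) (x - a)) / (k + 1)! := by
  have hB : ∀ x ∈ Set.uIcc a (a + 1),
      HasDerivAt (fun y => bernoulliFun (k + 1) (y - a)) ((k + 1) * bernoulliFun k (x - a)) x :=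
    fun x _ => by
      simpa using (hasDerivAt_bernoulliFun (k + 1) (x - a)).comp_sub_const x a
  have hB' :
      IntervalIntegrable (fun x => (k + 1 : ℝ) * bernoulliFun k (x - a)) volume a (a + 1) :=
    ((continuous_bernoulliFun k).comp (continuous_sub_right a)).const_mul _
      |>.intervalIntegrable _ _
  have ibp := intervalIntegral.integral_mul_deriv_eq_deriv_mul hg hB hg' hB'
  simp only [add_sub_cancel_left, sub_self, mul_left_comm (g _),
    intervalIntegral.integral_const_mul] at ibp
  rw [Nat.factorial_succ, Nat.cast_mul, Nat.cast_add_one, ← sub_div, ← ibp]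
  field_simp

theorem ContDiff.hasDerivAt_iteratedDeriv {n : WithTop ℕ∞} {k : ℕ} {f : ℝ → ℝ}
    (hf : ContDiff ℝ n f) (hk : k < n) (x : ℝ) :
    HasDerivAt (iteratedDeriv k f) (iteratedDeriv (k + 1) f x) x := by
  rw [iteratedDeriv_succ]
  exact (hf.differentiable_iteratedDeriv k hk x).hasDerivAt

theorem integral_iteratedDeriv_mul_bernoulliFun_sub {k : ℕ} {f : ℝ → ℝ}
    (hf : ContDiff ℝ (k + 1) f) (a : ℝ) :
    (∫ x in a..a + 1, iteratedDeriv k f x * bernoulliFun k (x - a)) / k ! =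
      (iteratedDeriv k f (a + 1) * bernoulliFun (k + 1) 1 -
          iteratedDeriv k f a * bernoulliFun (k + 1) 0) / (k + 1)! -
        (∫ x in a..a + 1, iteratedDeriv (k + 1) f x * bernoulliFun (k + 1) (x - a)) / (k + 1)! :=
  integral_mul_bernoulliFun_sub
    (fun x _ => hf.hasDerivAt_iteratedDeriv (mod_cast k.lt_succ_self) x)
    ((hf.continuous_iteratedDeriv (k + 1) le_rfl).intervalIntegrable _ _) k

theorem integral_add_one_eq_eulerMaclaurin (p : ℕ) {f : ℝ → ℝ} (hf : ContDiff ℝ (2 * p + 1) f)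
    (a : ℝ) :
    ∫ x in a..a + 1, f x = (f a + f (a + 1)) / 2 -
      ∑ j ∈ Finset.Icc 1 p, ((bernoulli (2 * j) : ℚ) : ℝ) / ((2 * j).factorial : ℝ) *
        (iteratedDeriv (2 * j - 1) f (a + 1) - iteratedDeriv (2 * j - 1) f a) -
      (∫ x in a..a + 1, iteratedDeriv (2 * p + 1) f x * bernoulliFun (2 * p + 1) (x - a)) /
        (2 * p + 1)! := by
  induction p with
  | zero =>
    have h := integral_iteratedDeriv_mul_bernoulliFun_sub (k := 0) (by simpa using hf) a
    simp only [iteratedDeriv_zero, bernoulliFun_zero] at h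
    norm_num at h ⊢
    linarith
  | succ p ih =>
    have hB : ∀ k, k ≠ 0 → bernoulliFun (k + 1) 1 = bernoulli (k + 1) ∧
        bernoulliFun (k + 1) 0 = bernoulli (k + 1) := fun k hk =>
      ⟨by rw [bernoulliFun_endpoints_eq_of_ne_one (by omega), bernoulliFun_eval_zero],
        bernoulliFun_eval_zero _⟩
    have hodd : bernoulli (2 * p + 1 + 1 + 1) = 0 :=
      bernoulli_eq_zero_of_odd ⟨p + 1, by ring⟩ (by omega)
    have h₁ := integral_iteratedDeriv_mul_bernoulliFun_sub (k := 2 * p + 1)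
      (hf.of_le (by norm_cast; omega)) a
    have h₂ := integral_iteratedDeriv_mul_bernoulliFun_sub (k := 2 * p + 1 + 1)
      (hf.of_le (by norm_cast)) a
    rw [(hB _ (by omega)).1, (hB _ (by omega)).2] at h₁ h₂
    rw [hodd] at h₂
    rw [ih (hf.of_le (by norm_cast; omega)), Finset.sum_Icc_succ_top (by omega),
      show 2 * (p + 1) - 1 = 2 * p + 1 by omega, show 2 * (p + 1) = 2 * p + 1 + 1 by omega,
      h₁, h₂]
    push_cast
    ring

theorem sum_range_succ_eq_eulerMaclaurin (p : ℕ) {f : ℝ → ℝ} (hf : ContDiff ℝ (2 * p + 1) f)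
    (N : ℕ) :
    ∑ k ∈ Finset.range (N + 1), f k = (∫ x in (0 : ℝ)..N, f x) + (f 0 + f N) / 2 +
      ∑ j ∈ Finset.Icc 1 p, ((bernoulli (2 * j) : ℚ) : ℝ) / ((2 * j).factorial : ℝ) *
        (iteratedDeriv (2 * j - 1) f N - iteratedDeriv (2 * j - 1) f 0) +
      (∫ x in (0 : ℝ)..N, iteratedDeriv (2 * p + 1) f x * bernoulliFun (2 * p + 1) (Int.fract x)) /
        (2 * p + 1)! := by
  have hf₀ : Continuous f := hf.continuous
  have hR (a b : ℝ) : IntervalIntegrable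
      (fun x => iteratedDeriv (2 * p + 1) f x * bernoulliFun (2 * p + 1) (Int.fract x))
      volume a b := by
    have hcont := hf.continuous_iteratedDeriv (2 * p + 1) le_rfl
    exact intervalIntegrable_iff.mpr
      ((intervalIntegrable_iff.mp (hcont.intervalIntegrable a b)).mul_bernoulliFun_fract _)
  induction N with
  | zero => simp
  | succ N ih =>
    have hunit := integral_add_one_eq_eulerMaclaurin p hf N
    have hfract := integral_comp_fract_eq_sub
      (fun t x => iteratedDeriv (2 * p + 1) f x * bernoulliFun (2 * p + 1) t) N
    rw [Finset.sum_range_succ, ih]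
    push_cast at hfract ⊢
    rw [← intervalIntegral.integral_add_adjacent_intervals
      (hf₀.intervalIntegrable 0 N) (hf₀.intervalIntegrable N (N + 1)),
      ← intervalIntegral.integral_add_adjacent_intervals (hR 0 N) (hR N (N + 1)), hfract, hunit]
    simp only [mul_sub, Finset.sum_sub_distrib]
    ring

theorem emG_eq_of_hasDerivAt (m : ℕ) {f F : ℝ → ℝ} (hF : ∀ x, HasDerivAt F (f x) x) (x : ℝ) :
    emG m F x = F (x - 1) + f (x - 1) / 2 +
      ∑ j ∈ Finset.Icc 1 (m - 1), ((bernoulli (2 * j) : ℚ) : ℝ) / ((2 * j).factorial : ℝ) *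
        iteratedDeriv (2 * j - 1) f (x - 1) := by
  have hderiv : deriv F = f := funext fun x => (hF x).deriv
  refine congr_arg₂ _ (by rw [hderiv]) (Finset.sum_congr rfl fun j hj => ?_)
  obtain ⟨i, rfl⟩ : ∃ i, j = i + 1 := ⟨j - 1, by grind⟩
  rw [show 2 * (i + 1) = 2 * i + 1 + 1 by ring, iteratedDeriv_succ', hderiv,
    add_tsub_cancel_right]

theorem sum_range_sub_emG {m₀ p : ℕ} (hm₀ : 1 ≤ m₀) (hp : m₀ ≤ p + 1) {f F : ℝ → ℝ}
    (hf : ContDiff ℝ (2 * p + 1) f) (hF : ∀ x, HasDerivAt F (f x) x) (N : ℕ) :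
    ∑ k ∈ Finset.range (N + 1), f k - emG m₀ F (N + 1 : ℕ) =
      f 0 - emG (p + 1) F 1 +
        (∫ x in (0 : ℝ)..N,
          iteratedDeriv (2 * p + 1) f x * bernoulliFun (2 * p + 1) (Int.fract x)) / (2 * p + 1)! +
        ∑ j ∈ Finset.Icc m₀ p, ((bernoulli (2 * j) : ℚ) : ℝ) / ((2 * j).factorial : ℝ) *
          iteratedDeriv (2 * j - 1) f N := by
  have hsplit (g : ℕ → ℝ) :
      ∑ j ∈ Finset.Icc 1 p, g j =
        ∑ j ∈ Finset.Icc 1 (m₀ - 1), g j + ∑ j ∈ Finset.Icc m₀ p, g j := by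
    rw [← Finset.sum_union (Finset.disjoint_left.mpr fun j h₁ h₂ => by
      simp only [Finset.mem_Icc] at h₁ h₂; omega)]
    congr 1
    ext j
    simp only [Finset.mem_union, Finset.mem_Icc]
    omega
  have hint : ∫ x in (0 : ℝ)..N, f x = F N - F 0 :=
    intervalIntegral.integral_eq_sub_of_hasDerivAt (fun x _ => hF x)
      (hf.continuous.intervalIntegrable _ _)
  rw [sum_range_succ_eq_eulerMaclaurin p hf N, hint, emG_eq_of_hasDerivAt _ hF,
    emG_eq_of_hasDerivAt _ hF, add_tsub_cancel_right]
  push_cast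
  simp only [mul_sub, Finset.sum_sub_distrib, add_sub_cancel_right, sub_self]
  rw [hsplit fun j => ((bernoulli (2 * j) : ℚ) : ℝ) / ((2 * j).factorial : ℝ) *
    iteratedDeriv (2 * j - 1) f N]
  ring

/-- Summing (possibly divergent) series by the Euler–Maclaurin formula: if
`f^{(2j−1)}(x) → 0` as `x → ∞` for `j = m₀,…,m−1` and `∫_0^∞ |f^{(2m−1)}| < ∞`, then
`∑_{k=0}^{n−1} f(k) − G^EM_{m₀,F}(n)` converges as `n → ∞` to
`f(0) − G^EM_{m,F}(1) + R^EM_{m,f}(∞)`. -/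
theorem em_generalized_sum (m₀ m : ℕ) (hm₀ : 1 ≤ m₀) (hm : m₀ ≤ m)
    (f F : ℝ → ℝ) (hf : ContDiff ℝ (2 * m) f) (hF : ∀ x : ℝ, HasDerivAt F (f x) x)
    (hto0 : ∀ j : ℕ, m₀ ≤ j → j ≤ m - 1 →
      Filter.Tendsto (iteratedDeriv (2 * j - 1) f) Filter.atTop (nhds 0))
    (hint : IntegrableOn (iteratedDeriv (2 * m - 1) f) (Set.Ici (0 : ℝ))) :
    Filter.Tendsto
      (fun n : ℕ => ∑ k ∈ Finset.range n, f k - emG m₀ F (n : ℝ))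
      Filter.atTop
      (nhds (f 0 - emG m F 1 +
        1 / ((2 * m - 1).factorial : ℝ) *
          ∫ x in Set.Ici (0 : ℝ),
            iteratedDeriv (2 * m - 1) f x *
              (Polynomial.aeval (Int.fract x) (Polynomial.bernoulli (2 * m - 1)) : ℝ))) := by
  obtain ⟨p, rfl⟩ : ∃ p, m = p + 1 := ⟨m - 1, by omega⟩
  rw [show 2 * (p + 1) - 1 = 2 * p + 1 by omega] at hint ⊢
  rw [add_tsub_cancel_right] at hto0
  rw [← Filter.tendsto_add_atTop_iff_nat 1]
  simp only [← bernoulliFun_eq_aeval, one_div_mul_eq_div,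
    sum_range_sub_emG hm₀ hm (hf.of_le (by norm_cast; omega)) hF]
  have hremainder : Filter.Tendsto
      (fun N : ℕ => ∫ x in (0 : ℝ)..N,
        iteratedDeriv (2 * p + 1) f x * bernoulliFun (2 * p + 1) (Int.fract x))
      Filter.atTop
      (nhds (∫ x in Set.Ici (0 : ℝ),
        iteratedDeriv (2 * p + 1) f x * bernoulliFun (2 * p + 1) (Int.fract x))) := by
    rw [integral_Ici_eq_integral_Ioi]
    exact intervalIntegral_tendsto_integral_Ioi 0
      ((hint.mul_bernoulliFun_fract _).mono_set Set.Ioi_subset_Ici_self)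
      tendsto_natCast_atTop_atTop
  have htail := tendsto_finsetSum (Finset.Icc m₀ p) fun j hj =>
    ((hto0 j (Finset.mem_Icc.mp hj).1 (Finset.mem_Icc.mp hj).2).comp
      tendsto_natCast_atTop_atTop).const_mul
      (((bernoulli (2 * j) : ℚ) : ℝ) / ((2 * j).factorial : ℝ))
  simpa using (tendsto_const_nhds.add (hremainder.div_const _)).add htail
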